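/- Let n ≥ 2 and let Φ denote the cumulative distribution function of the standard Gaussian distribution N(0,1). Fix A* ∈ ℝ^{n×n}, c* ∈ ℝ^n, and define P_{A*,c*}(y,x) = ∏_{i=1}^n (1 − Φ(c*_i − (A*y)_i))^{x_i} · Φ(c*_i − (A*y)_i)^{1−x_i}. Let m be a probability mass function on {0,1}^n with m(y) > 0 for every y, and set μ(x,y) := m(y) · P_{A*,c*}(y,x). Then the function L(A,c) := Σ_{(x,y)} μ(x,y) · Σ_{i=1}^n [ x_i · log(1 − Φ(c_i − (Ay)_i)) + (1 − x_i) · log Φ(c_i − (Ay)_i) ] is strictly concave on ℝ^{n×n} × ℝ^n and attains its unique global maximum at (A,c) = (A*,c*). -/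

import Mathlib

open Matrix

/-- The real value of a binary observation coordinate. -/
def bval (b : Bool) : ℝ := if b then 1 else 0

/-- CDF of the standard Gaussian distribution `N(0,1)`. -/
noncomputable def gaussCDF (x : ℝ) : ℝ :=
  ((ProbabilityTheory.gaussianReal 0 1) (Set.Iic x)).toReal

/-- The expected log-likelihood objective. -/
noncomputable def Lobj (n : ℕ) (μ : (Fin n → Bool) × (Fin n → Bool) → ℝ)
    (θ : Matrix (Fin n) (Fin n) ℝ × (Fin n → ℝ)) : ℝ :=
  ∑ z : (Fin n → Bool) × (Fin n → Bool), μ z *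
    ∑ i, (bval (z.1 i) *
        Real.log (1 - gaussCDF (θ.2 i - (θ.1.mulVec (fun j => bval (z.2 j))) i))
      + (1 - bval (z.1 i)) *
        Real.log (gaussCDF (θ.2 i - (θ.1.mulVec (fun j => bval (z.2 j))) i)))

/-!
Write `t = c_i - (A y)_i` for the probit threshold of coordinate `i` after state `y`; it is linear
in `(A, c)`, and the family of all thresholds determines `(A, c)`. Summing out `x` under the
product kernel `P_{A*,c*}(y, ·)` turns `L` into `∑_{y,i} m(y) ℓ_{t*}(t)` with
`ℓ_s(t) = (1 - Φ s) log (1 - Φ t) + Φ s log (Φ t)`. Each `ℓ_s` is strictly concave, since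
`log (1 - Φ t) = log Φ(-t)` and `log Φ` has the strictly decreasing derivative `φ / Φ` (by the
Mills-type bound `x Φ(x) + φ(x) = ∫_{-∞}^x (x - u) φ(u) du > 0`), and by Gibbs' inequality its
unique maximum is at `t = s`. Injectivity of the thresholds transfers both facts to `L`.
-/

open Real Set Filter MeasureTheory ProbabilityTheory

section StrictConcavity

variable {E F : Type*} [AddCommGroup E] [Module ℝ E] [AddCommGroup F] [Module ℝ F]

lemma StrictConcaveOn.const_mul {s : Set E} {f : E → ℝ} (hf : StrictConcaveOn ℝ s f) {c : ℝ}
    (hc : 0 < c) : StrictConcaveOn ℝ s fun x => c * f x := by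
  refine ⟨hf.1, fun x hx y hy hxy a b ha hb hab => ?_⟩
  have := mul_lt_mul_of_pos_left (hf.2 hx hy hxy ha hb hab) hc
  simp only [smul_eq_mul] at this ⊢
  linarith

lemma StrictConcaveOn.comp_linearMap_of_injective {f : F → ℝ} (hf : StrictConcaveOn ℝ univ f)
    {g : E →ₗ[ℝ] F} (hg : Function.Injective g) : StrictConcaveOn ℝ univ (f ∘ g) := by
  refine ⟨convex_univ, fun x _ y _ hxy a b ha hb hab => ?_⟩
  simpa only [Function.comp_apply, map_add, map_smul] using
    hf.2 trivial trivial (hg.ne hxy) ha hb hab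

lemma strictConcaveOn_univ_sum_apply {ι : Type*} [Fintype ι] {f : ι → ℝ → ℝ}
    (hf : ∀ i, StrictConcaveOn ℝ univ (f i)) :
    StrictConcaveOn ℝ univ fun u : ι → ℝ => ∑ i, f i (u i) := by
  refine ⟨convex_univ, fun u _ v _ huv a b ha hb hab => ?_⟩
  obtain ⟨i, hi⟩ := Function.ne_iff.1 huv
  simp only [smul_eq_mul, Finset.mul_sum, ← Finset.sum_add_distrib, Pi.add_apply, Pi.smul_apply]
  exact Finset.sum_lt_sum (fun j _ => (hf j).concaveOn.2 trivial trivial ha.le hb.le hab)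
    ⟨i, Finset.mem_univ i, (hf i).2 trivial trivial hi ha hb hab⟩

end StrictConcavity

lemma sum_apply_lt_sum_apply_of_ne {ι : Type*} [Fintype ι] {f : ι → ℝ → ℝ}
    {u₀ u : ι → ℝ} (hf : ∀ i t, t ≠ u₀ i → f i t < f i (u₀ i)) (hu : u ≠ u₀) :
    ∑ i, f i (u i) < ∑ i, f i (u₀ i) := by
  obtain ⟨i, hi⟩ := Function.ne_iff.1 hu
  refine Finset.sum_lt_sum (fun j _ => ?_) ⟨i, Finset.mem_univ i, hf i _ hi⟩
  obtain h | h := eq_or_ne (u j) (u₀ j)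
  · rw [h]
  · exact (hf j _ h).le

lemma mul_log_add_mul_log_one_sub_lt {q r : ℝ} (hq₀ : 0 < q) (hq₁ : q < 1) (hr₀ : 0 < r)
    (hr₁ : r < 1) (hrq : r ≠ q) :
    q * log r + (1 - q) * log (1 - r) < q * log q + (1 - q) * log (1 - q) := by
  have h₀ : log (r / q) < r / q - 1 :=
    log_lt_sub_one_of_pos (div_pos hr₀ hq₀) (by rwa [ne_eq, div_eq_one_iff_eq hq₀.ne'])
  have h₁ : log ((1 - r) / (1 - q)) ≤ (1 - r) / (1 - q) - 1 :=
    log_le_sub_one_of_pos (div_pos (by linarith) (by linarith))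
  have e₀ : q * (r / q - 1) = r - q := by field_simp
  have e₁ : (1 - q) * ((1 - r) / (1 - q) - 1) = q - r := by
    field_simp [(sub_pos.2 hq₁).ne']; ring
  rw [log_div hr₀.ne' hq₀.ne'] at h₀
  rw [log_div (by linarith) (by linarith)] at h₁
  linarith [mul_lt_mul_of_pos_left h₀ hq₀, mul_le_mul_of_nonneg_left h₁ (sub_pos.2 hq₁).le]

lemma sum_pi_prod_mul_apply {ι β R : Type*} [Fintype ι] [DecidableEq ι] [Fintype β]
    [CommSemiring R] (W : ι → β → R) (hW : ∀ j, ∑ b, W j b = 1) (g : β → R) (i : ι) :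
    ∑ x : ι → β, (∏ j, W j (x j)) * g (x i) = ∑ b, W i b * g b := by
  set V := Function.update W i fun b => W i b * g b
  have hV (x : ι → β) : (∏ j, W j (x j)) * g (x i) = ∏ j, V j (x j) := by
    simp only [V, Function.apply_update (fun j (w : β → R) => w (x j)),
      Finset.prod_update_of_mem (Finset.mem_univ i)]
    rw [Finset.prod_eq_mul_prod_sdiff_singleton_of_mem (Finset.mem_univ i)]
    ring
  simp only [hV, ← Fintype.prod_sum]
  rw [Finset.prod_eq_single i (fun j _ hj => by simp [V, hj, hW]) (by simp)]
  simp [V]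

local notation "φ" => gaussianPDFReal 0 1

lemma gaussianPDFReal_zero_one (x : ℝ) : φ x = (√(2 * π))⁻¹ * exp (-x ^ 2 / 2) := by
  simp [gaussianPDFReal]

lemma hasDerivAt_gaussianPDFReal (μ : ℝ) (v : NNReal) (x : ℝ) :
    HasDerivAt (gaussianPDFReal μ v) (-(x - μ) / v * gaussianPDFReal μ v x) x := by
  have h : HasDerivAt (fun x => -(x - μ) ^ 2 / (2 * v)) (-(x - μ) / v) x :=
    ((((hasDerivAt_id' x).sub_const μ).pow 2).neg.div_const (2 * (v : ℝ))).congr_deriv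
      (by field_simp; ring)
  exact (h.exp.const_mul (√(2 * π * v))⁻¹).congr_deriv (by rw [gaussianPDFReal]; ring)

lemma tendsto_gaussianPDFReal_zero_one_atBot : Tendsto φ atBot (nhds 0) := by
  have h : Tendsto (fun x : ℝ => -x ^ 2 / 2) atBot atBot := by
    have := (tendsto_pow_atTop (α := ℝ) two_ne_zero).comp tendsto_abs_atBot_atTop
    simpa [Function.comp_def, sq_abs, neg_div] using
      (tendsto_neg_atTop_atBot.comp (this.atTop_div_const two_pos))
  have := (tendsto_exp_atBot.comp h).const_mul (√(2 * π))⁻¹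
  rw [mul_zero] at this
  exact this.congr fun x => (gaussianPDFReal_zero_one x).symm

lemma integrable_mul_gaussianPDFReal_zero_one : Integrable fun t => t * φ t := by
  refine ((integrable_mul_exp_neg_mul_sq (b := 1 / 2) (by norm_num)).const_mul
    (√(2 * π))⁻¹).congr (ae_of_all _ fun t => ?_)
  dsimp only
  rw [gaussianPDFReal_zero_one, show -(1 / 2) * t ^ 2 = -t ^ 2 / 2 by ring]
  ring

lemma integral_Iic_mul_gaussianPDFReal_zero_one (x : ℝ) : ∫ t in Iic x, t * φ t = -φ x := by
  rw [integral_Iic_of_hasDerivAt_of_tendsto' (f := fun t => -φ t) (m := 0)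
    (fun t _ => (hasDerivAt_gaussianPDFReal 0 1 t).neg.congr_deriv (by simp))
    integrable_mul_gaussianPDFReal_zero_one.integrableOn
    (by simpa using tendsto_gaussianPDFReal_zero_one_atBot.neg), sub_zero]

lemma gaussCDF_eq_integral (x : ℝ) : gaussCDF x = ∫ t in Iic x, φ t := by
  rw [gaussCDF, gaussianReal_apply_eq_integral 0 one_ne_zero,
    ENNReal.toReal_ofReal (integral_nonneg fun t => gaussianPDFReal_nonneg 0 1 t)]

lemma hasDerivAt_gaussCDF (x : ℝ) : HasDerivAt gaussCDF (φ x) x := by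
  have hint : Integrable φ := integrable_gaussianPDFReal 0 1
  have hcont : Continuous φ := by rw [gaussianPDFReal_def]; fun_prop
  have h : gaussCDF = fun y => gaussCDF 0 + ∫ t in (0 : ℝ)..y, φ t := by
    funext y
    rw [gaussCDF_eq_integral, gaussCDF_eq_integral,
      ← intervalIntegral.integral_Iic_sub_Iic hint.integrableOn hint.integrableOn]
    ring
  rw [h]
  exact (intervalIntegral.integral_hasDerivAt_right hint.intervalIntegrable
    (hcont.stronglyMeasurableAtFilter _ _) hcont.continuousAt).const_add _

lemma strictMono_gaussCDF : StrictMono gaussCDF :=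
  strictMono_of_deriv_pos fun x =>
    (hasDerivAt_gaussCDF x).deriv ▸ gaussianPDFReal_pos 0 1 x one_ne_zero

lemma gaussCDF_pos (x : ℝ) : 0 < gaussCDF x :=
  ENNReal.toReal_nonneg.trans_lt (strictMono_gaussCDF (sub_one_lt x))

lemma gaussCDF_neg (x : ℝ) : gaussCDF (-x) = 1 - gaussCDF x := by
  have hint : Integrable φ := integrable_gaussianPDFReal 0 1
  have h := intervalIntegral.integral_Iic_add_Ioi (b := x) hint.integrableOn hint.integrableOn
  rw [integral_gaussianPDFReal_eq_one 0 one_ne_zero, ← gaussCDF_eq_integral] at h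
  rw [gaussCDF_eq_integral, ← integral_comp_neg_Ioi]
  simp only [gaussianPDFReal_zero_one, neg_sq] at h ⊢
  linarith

lemma gaussCDF_lt_one (x : ℝ) : gaussCDF x < 1 := by
  linarith [gaussCDF_neg x, gaussCDF_pos (-x)]

lemma mul_gaussCDF_add_gaussianPDFReal_pos (x : ℝ) : 0 < x * gaussCDF x + φ x := by
  have hint : Integrable φ := integrable_gaussianPDFReal 0 1
  have hint' : Integrable fun t => (x - t) * φ t :=
    (hint.const_mul x).sub integrable_mul_gaussianPDFReal_zero_one |>.congr
      (ae_of_all _ fun t => by simp only [Pi.sub_apply]; ring)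
  have h : ∫ t in Iic x, (x - t) * φ t = x * gaussCDF x + φ x := by
    simp only [sub_mul]
    rw [integral_sub (hint.const_mul x).integrableOn
      integrable_mul_gaussianPDFReal_zero_one.integrableOn, integral_const_mul,
      integral_Iic_mul_gaussianPDFReal_zero_one, gaussCDF_eq_integral, sub_neg_eq_add]
  rw [← h, setIntegral_pos_iff_support_of_nonneg_ae _ hint'.integrableOn]
  · refine (by simp : (0 : ENNReal) < volume (Iio x)).trans_le (measure_mono fun t ht => ?_)
    exact ⟨(mul_pos (sub_pos.2 ht) (gaussianPDFReal_pos 0 1 t one_ne_zero)).ne',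
      mem_Iic.2 ht.le⟩
  · exact (ae_restrict_iff' measurableSet_Iic).2 (ae_of_all _ fun t ht =>
      mul_nonneg (sub_nonneg.2 ht) (gaussianPDFReal_nonneg 0 1 t))

lemma strictAnti_gaussianPDFReal_div_gaussCDF : StrictAnti fun x => φ x / gaussCDF x := by
  refine strictAnti_of_deriv_neg fun x => ?_
  have h : HasDerivAt (fun x => φ x / gaussCDF x) _ x :=
    (hasDerivAt_gaussianPDFReal 0 1 x).div (hasDerivAt_gaussCDF x) (gaussCDF_pos x).ne'
  rw [h.deriv]
  have := mul_pos (gaussianPDFReal_pos 0 1 x one_ne_zero)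
    (mul_gaussCDF_add_gaussianPDFReal_pos x)
  refine div_neg_of_neg_of_pos ?_ (pow_pos (gaussCDF_pos x) 2)
  simp only [sub_zero, NNReal.coe_one, div_one]
  linarith

lemma strictConcaveOn_log_gaussCDF : StrictConcaveOn ℝ univ fun x => log (gaussCDF x) := by
  have h x : HasDerivAt (fun x => log (gaussCDF x)) (φ x / gaussCDF x) x :=
    (hasDerivAt_gaussCDF x).log (gaussCDF_pos x).ne'
  refine StrictAnti.strictConcaveOn_univ_of_deriv
    (continuous_iff_continuousAt.2 fun x => (h x).continuousAt) ?_
  rw [show deriv (fun x => log (gaussCDF x)) = _ from funext fun x => (h x).deriv]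
  exact strictAnti_gaussianPDFReal_div_gaussCDF

noncomputable def probitWeight (s : ℝ) (b : Bool) : ℝ :=
  if b then 1 - gaussCDF s else gaussCDF s

noncomputable def expectedProbitLogLik (s t : ℝ) : ℝ :=
  (1 - gaussCDF s) * log (1 - gaussCDF t) + gaussCDF s * log (gaussCDF t)

lemma sum_probitWeight (s : ℝ) : ∑ b, probitWeight s b = 1 := by
  simp [probitWeight]

lemma sum_probitWeight_mul_logLik (s t : ℝ) :
    ∑ b, probitWeight s b *
      (bval b * log (1 - gaussCDF t) + (1 - bval b) * log (gaussCDF t)) =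
      expectedProbitLogLik s t := by
  simp [probitWeight, bval, expectedProbitLogLik, add_comm]

lemma strictConcaveOn_expectedProbitLogLik (s : ℝ) :
    StrictConcaveOn ℝ univ (expectedProbitLogLik s) := by
  have hneg : StrictConcaveOn ℝ univ fun t => log (1 - gaussCDF t) := by
    simpa only [Function.comp_def, LinearMap.neg_apply, LinearMap.id_apply, gaussCDF_neg] using
      strictConcaveOn_log_gaussCDF.comp_linearMap_of_injective
        (g := -LinearMap.id) neg_injective
  exact (hneg.const_mul (sub_pos.2 (gaussCDF_lt_one s))).add
    (strictConcaveOn_log_gaussCDF.const_mul (gaussCDF_pos s))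

lemma expectedProbitLogLik_lt {s t : ℝ} (hts : t ≠ s) :
    expectedProbitLogLik s t < expectedProbitLogLik s s := by
  have := mul_log_add_mul_log_one_sub_lt (sub_pos.2 (gaussCDF_lt_one s))
    (sub_lt_self 1 (gaussCDF_pos s)) (sub_pos.2 (gaussCDF_lt_one t))
    (sub_lt_self 1 (gaussCDF_pos t)) (by simpa using strictMono_gaussCDF.injective.ne hts)
  simp only [sub_sub_cancel] at this
  unfold expectedProbitLogLik
  linarith

def probitThreshold (n : ℕ) :
    Matrix (Fin n) (Fin n) ℝ × (Fin n → ℝ) →ₗ[ℝ] ((Fin n → Bool) × Fin n → ℝ) where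
  toFun θ p := θ.2 p.2 - (θ.1 *ᵥ fun j => bval (p.1 j)) p.2
  map_add' θ θ' := by ext p; simp [Matrix.add_mulVec]; ring
  map_smul' a θ := by ext p; simp [Matrix.smul_mulVec]; ring

lemma probitThreshold_injective (n : ℕ) : Function.Injective (probitThreshold n) := by
  refine (injective_iff_map_eq_zero _).2 fun θ hθ => ?_
  have hc i : θ.2 i = 0 := by
    simpa [probitThreshold, bval, Matrix.mulVec, dotProduct] using
      congr_fun hθ (fun _ => false, i)
  have hA i j : θ.1 i j = 0 := by
    simpa [probitThreshold, bval, Matrix.mulVec, dotProduct, hc] using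
      congr_fun hθ (fun k => decide (k = j), i)
  exact Prod.ext (Matrix.ext hA) (funext hc)

lemma Lobj_eq_sum_expectedProbitLogLik {n : ℕ}
    (θstar : Matrix (Fin n) (Fin n) ℝ × (Fin n → ℝ)) (m : (Fin n → Bool) → ℝ)
    (μ : (Fin n → Bool) × (Fin n → Bool) → ℝ)
    (hμ : ∀ x y, μ (x, y) = m y * ∏ i, probitWeight (probitThreshold n θstar (y, i)) (x i))
    (θ : Matrix (Fin n) (Fin n) ℝ × (Fin n → ℝ)) :
    Lobj n μ θ = ∑ p, m p.1 *
      expectedProbitLogLik (probitThreshold n θstar p) (probitThreshold n θ p) := by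
  rw [Lobj, Fintype.sum_prod_type, Finset.sum_comm, Fintype.sum_prod_type]
  refine Finset.sum_congr rfl fun y _ => ?_
  simp only [hμ, Finset.mul_sum, mul_assoc]
  rw [Finset.sum_comm]
  refine Finset.sum_congr rfl fun i _ => ?_
  rw [← Finset.mul_sum]
  exact congrArg (m y * ·) ((sum_pi_prod_mul_apply _ (fun j => sum_probitWeight _) _ i).trans
    (sum_probitWeight_mul_logLik _ _))

theorem stmt11_general (n : ℕ)
    (Astar : Matrix (Fin n) (Fin n) ℝ) (cstar : Fin n → ℝ)
    (m : (Fin n → Bool) → ℝ) (hm : ∀ y, 0 < m y)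
    (μ : (Fin n → Bool) × (Fin n → Bool) → ℝ)
    (hμ : ∀ x y, μ (x, y) = m y *
      ∏ i, if x i
        then 1 - gaussCDF (cstar i - (Astar.mulVec (fun j => bval (y j))) i)
        else gaussCDF (cstar i - (Astar.mulVec (fun j => bval (y j))) i)) :
    StrictConcaveOn ℝ Set.univ (Lobj n μ) ∧
    (∀ θ : Matrix (Fin n) (Fin n) ℝ × (Fin n → ℝ),
      θ ≠ (Astar, cstar) → Lobj n μ θ < Lobj n μ (Astar, cstar)) := by
  set T := probitThreshold n
  have hL : Lobj n μ = fun θ =>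
      ∑ p, m p.1 * expectedProbitLogLik (T (Astar, cstar) p) (T θ p) :=
    funext (Lobj_eq_sum_expectedProbitLogLik (Astar, cstar) m μ hμ)
  refine ⟨?_, fun θ hθ => ?_⟩
  · rw [hL]
    exact (strictConcaveOn_univ_sum_apply fun p =>
      (strictConcaveOn_expectedProbitLogLik _).const_mul (hm p.1)).comp_linearMap_of_injective
        (probitThreshold_injective n)
  · rw [hL]
    exact sum_apply_lt_sum_apply_of_ne
      (f := fun p t => m p.1 * expectedProbitLogLik (T (Astar, cstar) p) t)
      (fun p t ht => mul_lt_mul_of_pos_left (expectedProbitLogLik_lt ht) (hm p.1))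
      ((probitThreshold_injective n).ne hθ)

/-- **Theorem 4** (strict concavity and the true parameter as unique maximum).
If `μ(x,y) = m(y) P_{A*,c*}(y,x)` with `m` everywhere positive and `P_{A*,c*}` the Gaussian
transition matrix of the true system, then the expected log-likelihood `L` is strictly concave
on `ℝ^{n×n} × ℝ^n` and attains its unique global maximum at `(A*, c*)`. -/
theorem stmt11 (n : ℕ) (hn : 2 ≤ n)
    (Astar : Matrix (Fin n) (Fin n) ℝ) (cstar : Fin n → ℝ)
    (m : (Fin n → Bool) → ℝ) (hm : ∀ y, 0 < m y) (hm1 : ∑ y, m y = 1)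
    (μ : (Fin n → Bool) × (Fin n → Bool) → ℝ)
    (hμ : ∀ x y, μ (x, y) = m y *
      ∏ i, if x i
        then 1 - gaussCDF (cstar i - (Astar.mulVec (fun j => bval (y j))) i)
        else gaussCDF (cstar i - (Astar.mulVec (fun j => bval (y j))) i)) :
    StrictConcaveOn ℝ Set.univ (Lobj n μ) ∧
    (∀ θ : Matrix (Fin n) (Fin n) ℝ × (Fin n → ℝ),
      θ ≠ (Astar, cstar) → Lobj n μ θ < Lobj n μ (Astar, cstar)) :=
  stmt11_general n Astar cstar m hm μ hμ
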